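/- Let p be a prime, G a finite abelian p-group with |G| = p^{h_r}, and let deg : Subgroups(G) → ℝ satisfy (i) deg(A) + deg(B) ≤ deg(A ∩ B) + deg(A + B) for all subgroups A, B, and (ii) deg(A) ≤ f(log_p|A|) for every subgroup A. Then for every 1 ≤ i ≤ r there is at most one subgroup A of G with |A| = p^{h_i} and deg(A) > d_i − δ. -/

import Mathlib

open Finset

/-- Uniqueness of canonical subgroups, abstract form: let `G` be a finite abelian `p`-group of
order `p^{h_r}` and `deg` a real-valued function on subgroups of `G` that is submodular
(`deg A + deg B ≤ deg (A ∩ B) + deg (A + B)`) and bounded by the Newton polygon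
(`deg A ≤ f(log_p |A|)`, where `f` is the piecewise linear concave function with slopes
`1 ≥ λ_1 > ⋯ > λ_r ≥ 0` and break points `0 = h_0 < h_1 < ⋯ < h_r`). Then for each
`1 ≤ i ≤ r` there is at most one subgroup `A` of `G` with `|A| = p^{h_i}` and
`deg A > d_i − δ`. -/
theorem unique_canonical_subgroup (p r : ℕ) (hp : p.Prime) (hr : 2 ≤ r)
    (lam : ℕ → ℝ) (h : ℕ → ℕ)
    (hlam1 : lam 1 ≤ 1) (hlamr : 0 ≤ lam r)
    (hlamdec : ∀ m, 1 ≤ m → m < r → lam (m + 1) < lam m)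
    (h0 : h 0 = 0) (hmono : ∀ m, m < r → h m < h (m + 1))
    (d : ℕ → ℝ)
    (hd : ∀ j, d j = ∑ m ∈ Finset.Icc 1 j, ((h m : ℝ) - (h (m - 1) : ℝ)) * lam m)
    (δ : ℝ)
    (hδ : δ = (1 / 4) *
      ((Finset.Icc 1 (r - 1)).inf' (Finset.nonempty_Icc.mpr (by omega))
        fun m => lam m - lam (m + 1)))
    (f : ℕ → ℝ)
    (hf : ∀ k, k < r → ∀ x : ℕ, h k ≤ x → x ≤ h (k + 1) →
      f x = d k + ((x : ℝ) - (h k : ℝ)) * lam (k + 1))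
    (G : Type*) [CommGroup G] [Finite G]
    (hcard : Nat.card G = p ^ h r)
    (deg : Subgroup G → ℝ)
    (hsubmod : ∀ A B : Subgroup G, deg A + deg B ≤ deg (A ⊓ B) + deg (A ⊔ B))
    (hbound : ∀ (A : Subgroup G) (a : ℕ), Nat.card ↥A = p ^ a → deg A ≤ f a) :
    ∀ i, 1 ≤ i → i ≤ r → ∀ A B : Subgroup G,
      Nat.card ↥A = p ^ h i → Nat.card ↥B = p ^ h i →
      d i - δ < deg A → d i - δ < deg B → A = B := by
  -- monotonicity of h
  have hmono' : ∀ n, n ≤ r → ∀ m, m ≤ n → h m ≤ h n := by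
    intro n
    induction n with
    | zero =>
      intro _ m hm
      have : m = 0 := by omega
      simp [this]
    | succ n IH =>
      intro hnr m hm
      rcases Nat.eq_or_lt_of_le hm with rfl | hm'
      · exact le_rfl
      · exact le_trans (IH (by omega) m (by omega)) (le_of_lt (hmono n (by omega)))
  have hsmono : ∀ m n, m < n → n ≤ r → h m < h n := by
    intro m n hmn hnr
    have h1 : h m ≤ h (n-1) := hmono' (n-1) (by omega) m (by omega)
    have h2 : h (n-1) < h (n-1+1) := hmono (n-1) (by omega)
    have h3 : n - 1 + 1 = n := by omega
    rw [h3] at h2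
    omega
  -- antitonicity of lam
  have hanti : ∀ m n, 1 ≤ m → m ≤ n → n ≤ r → lam n ≤ lam m := by
    intro m n h1m hmn
    induction n, hmn using Nat.le_induction with
    | base => intro _; exact le_rfl
    | succ n hmn IH =>
      intro hnr
      exact le_trans (le_of_lt (hlamdec n (by omega) (by omega))) (IH (by omega))
  have hdstep : ∀ j, d (j+1) = d j + ((h (j+1) : ℝ) - (h j : ℝ)) * lam (j+1) := by
    intro j
    rw [hd, hd, Finset.sum_Icc_succ_top (by omega)]
    simp
  -- lower bound on d i - d k (slopes left of i are ≥ lam i)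
  have hA : ∀ k i, k ≤ i → i ≤ r → lam i * ((h i : ℝ) - (h k : ℝ)) ≤ d i - d k := by
    intro k i hk
    induction i, hk using Nat.le_induction with
    | base => intro _; simp
    | succ i hki IH =>
      intro hir
      have hds := hdstep i
      have IH' := IH (by omega)
      rcases Nat.eq_zero_or_pos i with rfl | hi1
      · interval_cases k
        simp only [h0] at *
        linarith
      · have hlt : lam (i+1) < lam i := hlamdec i (by omega) (by omega)
        have hk_le : (h k : ℝ) ≤ h i := by exact_mod_cast hmono' i (by omega) k hki
        have hi_le : (h i : ℝ) ≤ h (i+1) := by exact_mod_cast le_of_lt (hmono i (by omega))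
        nlinarith [mul_le_mul_of_nonneg_right (le_of_lt hlt) (sub_nonneg.mpr hk_le)]
  -- upper bound on d k - d i (slopes right of i are ≤ lam (i+1))
  have hB : ∀ i k, i ≤ k → k ≤ r → d k - d i ≤ lam (i+1) * ((h k : ℝ) - (h i : ℝ)) := by
    intro i k hik
    induction k, hik using Nat.le_induction with
    | base => intro _; simp
    | succ k hik IH =>
      intro hkr
      have hds := hdstep k
      have IH' := IH (by omega)
      have hle : lam (k+1) ≤ lam (i+1) := hanti (i+1) (k+1) (by omega) (by omega) (by omega)
      have hk_le : (h k : ℝ) ≤ h (k+1) := by exact_mod_cast le_of_lt (hmono k (by omega))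
      nlinarith [mul_le_mul_of_nonneg_right hle (sub_nonneg.mpr hk_le)]
  -- locating x in a segment
  have hseg : ∀ x : ℕ, x ≤ h r → ∃ k, k < r ∧ h k ≤ x ∧ x ≤ h (k+1) := by
    intro x hx
    have key : ∀ j, 1 ≤ j → j ≤ r → x ≤ h j → ∃ k, k < j ∧ h k ≤ x ∧ x ≤ h (k+1) := by
      intro j h1j
      induction j, h1j using Nat.le_induction with
      | base => intro _ hx1; exact ⟨0, by omega, by omega, hx1⟩
      | succ j hj IH =>
        intro hjr hxj
        by_cases hcase : x ≤ h j
        · obtain ⟨k, hk, hk1, hk2⟩ := IH (by omega) hcase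
          exact ⟨k, by omega, hk1, hk2⟩
        · exact ⟨j, by omega, by omega, hxj⟩
    exact key r (by omega) le_rfl hx
  have hlamnn : ∀ i, 1 ≤ i → i ≤ r → 0 ≤ lam i := by
    intro i h1 h2; exact hlamr.trans (hanti i r h1 h2 le_rfl)
  -- f bound left of h i
  have hF1 : ∀ i, 1 ≤ i → i ≤ r → ∀ x : ℕ, x ≤ h i →
      f x ≤ d i - lam i * ((h i : ℝ) - (x : ℝ)) := by
    intro i h1i hir x hx
    obtain ⟨k, hkr, hkx, hxk⟩ := hseg x (le_trans hx (hmono' r le_rfl i hir))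
    have hfx := hf k hkr x hkx hxk
    by_cases hki : k + 1 ≤ i
    · have hAk := hA (k+1) i hki hir
      have hds := hdstep k
      have hle1 : lam i ≤ lam (k+1) := hanti (k+1) i (by omega) hki hir
      have hxk' : (x : ℝ) ≤ h (k+1) := by exact_mod_cast hxk
      rw [hfx]
      nlinarith [mul_nonneg (sub_nonneg.mpr hxk') (sub_nonneg.mpr hle1)]
    · have hik : i ≤ k := by omega
      have hkeq : k = i := by
        by_contra hne
        have := hsmono i k (by omega) (by omega)
        omega
      subst hkeq
      have hxi : x = h k := by omega
      rw [hfx, hxi]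
      simp
  -- f bound right of h i
  have hF2 : ∀ i, 1 ≤ i → i < r → ∀ x : ℕ, h i ≤ x → x ≤ h r →
      f x ≤ d i + lam (i+1) * ((x : ℝ) - (h i : ℝ)) := by
    intro i h1i hir x hix hxr
    obtain ⟨k, hkr, hkx, hxk⟩ := hseg x hxr
    have hfx := hf k hkr x hkx hxk
    by_cases hik : i ≤ k
    · have hBk := hB i k hik (by omega)
      have hle : lam (k+1) ≤ lam (i+1) := hanti (i+1) (k+1) (by omega) (by omega) (by omega)
      have hkx' : (h k : ℝ) ≤ x := by exact_mod_cast hkx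
      rw [hfx]
      nlinarith [mul_nonneg (sub_nonneg.mpr hkx') (sub_nonneg.mpr hle)]
    · have hki : k + 1 ≤ i := by omega
      have hkeq : k + 1 = i := by
        by_contra hne
        have := hsmono (k+1) i (by omega) (by omega)
        omega
      subst hkeq
      have hxi : x = h (k+1) := by omega
      have hds := hdstep k
      rw [hfx, hxi]
      push_cast
      linarith
  -- δ facts
  have hδpos : 0 < δ := by
    rw [hδ]
    have : (0 : ℝ) < (Finset.Icc 1 (r - 1)).inf' (Finset.nonempty_Icc.mpr (by omega))
        fun m => lam m - lam (m + 1) := by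
      rw [Finset.lt_inf'_iff]
      intro m hm
      rw [Finset.mem_Icc] at hm
      have := hlamdec m (by omega) (by omega)
      linarith
    linarith
  have hδle : ∀ i, 1 ≤ i → i ≤ r - 1 → 4 * δ ≤ lam i - lam (i+1) := by
    intro i h1 h2
    rw [hδ]
    have := Finset.inf'_le (f := fun m => lam m - lam (m + 1))
      (Finset.mem_Icc.mpr ⟨h1, h2⟩)
    linarith
  -- product formula for cards
  have hprod : ∀ A B : Subgroup G,
      Nat.card ↥(A ⊓ B) * Nat.card ↥(A ⊔ B) = Nat.card ↥A * Nat.card ↥B := by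
    intro A B
    have e1 : Nat.card ↥((A ⊓ B).subgroupOf B) = Nat.card ↥(A ⊓ B) :=
      Nat.card_congr (Subgroup.subgroupOfEquivOfLe inf_le_right).toEquiv
    have e2 : Nat.card ↥(A.subgroupOf (A ⊔ B)) = Nat.card ↥A :=
      Nat.card_congr (Subgroup.subgroupOfEquivOfLe le_sup_left).toEquiv
    have r1 : Nat.card ↥(A ⊓ B) * A.relIndex B = Nat.card ↥B := by
      have := Subgroup.card_mul_index (A.subgroupOf B)
      rw [← Subgroup.inf_subgroupOf_right A B] at this
      rw [Subgroup.relIndex, ← Subgroup.inf_subgroupOf_right A B, ← e1]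
      simpa using this
    have r2 : Nat.card ↥A * A.relIndex (A ⊔ B) = Nat.card ↥(A ⊔ B) := by
      have := Subgroup.card_mul_index (A.subgroupOf (A ⊔ B))
      rw [Subgroup.relIndex, ← e2]
      simpa using this
    have r3 : A.relIndex (A ⊔ B) = A.relIndex B := Subgroup.relIndex_sup_left B A
    calc Nat.card ↥(A ⊓ B) * Nat.card ↥(A ⊔ B)
        = Nat.card ↥(A ⊓ B) * (Nat.card ↥A * A.relIndex B) := by rw [← r2, r3]
      _ = Nat.card ↥A * (Nat.card ↥(A ⊓ B) * A.relIndex B) := by ring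
      _ = Nat.card ↥A * Nat.card ↥B := by rw [r1]
  -- main argument
  intro i h1i hir A B hcA hcB hdA hdB
  by_cases hireq : i = r
  · subst hireq
    have hA' : A = ⊤ := Subgroup.eq_top_of_card_eq A (hcA.trans hcard.symm)
    have hB' : B = ⊤ := Subgroup.eq_top_of_card_eq B (hcB.trans hcard.symm)
    rw [hA', hB']
  · have hirlt : i < r := lt_of_le_of_ne hir hireq
    by_contra hAB
    obtain ⟨a, ha_le, hca⟩ := (Nat.dvd_prime_pow hp).mp
      (hcA ▸ Subgroup.card_dvd_of_le (inf_le_left : A ⊓ B ≤ A))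
    obtain ⟨b, hb_le, hcb⟩ := (Nat.dvd_prime_pow hp).mp
      (hcard ▸ Subgroup.card_subgroup_dvd_card (A ⊔ B))
    have hab : a + b = 2 * h i := by
      have hpe : p ^ (a + b) = p ^ (2 * h i) := by
        rw [pow_add, ← hca, ← hcb, hprod A B, hcA, hcB, two_mul, pow_add]
      exact Nat.pow_right_injective hp.two_le hpe
    have halt : a < h i := by
      rcases Nat.lt_or_ge a (h i) with hlt | hge
      · exact hlt
      · exfalso
        have haeq : a = h i := by omega
        have hCA : A ⊓ B = A :=
          Subgroup.eq_of_le_of_card_ge inf_le_left (by rw [hca, haeq, hcA])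
        have hle : A ≤ B := inf_eq_left.mp hCA
        exact hAB (Subgroup.eq_of_le_of_card_ge hle (by rw [hcA, hcB]))
    have hbi : h i < b := by omega
    have hfa := hF1 i h1i hir a (by omega)
    have hfb := hF2 i h1i hirlt b (by omega) hb_le
    have hda := hbound (A ⊓ B) a hca
    have hdb := hbound (A ⊔ B) b hcb
    have hsm := hsubmod A B
    have hδi := hδle i h1i (by omega)
    have hba : (b : ℝ) - h i = (h i : ℝ) - a := by
      have : (a : ℝ) + b = 2 * h i := by exact_mod_cast hab
      linarith
    rw [hba] at hfb
    have h1le : (1 : ℝ) ≤ (h i : ℝ) - a := by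
      have : a + 1 ≤ h i := halt
      have : (a : ℝ) + 1 ≤ h i := by exact_mod_cast this
      linarith
    have hgap : lam (i+1) < lam i := hlamdec i h1i hirlt
    have key : lam i - lam (i+1) ≤ ((h i : ℝ) - a) * (lam i - lam (i+1)) :=
      le_mul_of_one_le_left (by linarith) h1le
    have c1 : deg A + deg B ≤ f a + f b := le_trans hsm (add_le_add hda hdb)
    have hexp : ((h i : ℝ) - a) * (lam i - lam (i+1)) =
        lam i * ((h i : ℝ) - a) - lam (i+1) * ((h i : ℝ) - a) := by ring
    have c2 : f a + f b ≤ 2 * d i - ((h i : ℝ) - a) * (lam i - lam (i+1)) := by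
      linarith [hfa, hfb, hexp]
    linarith [c1, c2, key, hδi, hδpos, hdA, hdB]
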